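/- arXiv:2605.04078 — 2 statements merged into one kernel-verified Lean document; each statement's English description precedes it below -/
import Mathlib

section
/- Let V be a finite set, π a strictly positive probability distribution on V, and r : V → ℝ nonconstant on the support. Then the function η ↦ KL(π_η ‖ π) is monotonically nondecreasing on [0, ∞), where π_η is the exponential tilt of π by η·r. -/
/-!
Writing `m(η)` for the mean of `r` under `π_η`, one has `KL(π_η ‖ π) = η m(η) - log Z(η)`.
Since `(log Z)' = m` and `m' = Var_{π_η}(r)`, the derivative of the divergence is
`η · Var_{π_η}(r)`, which is nonnegative for `η ≥ 0`.
-/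

noncomputable def Ztilt {V : Type*} [Fintype V] (p r : V → ℝ) (η : ℝ) : ℝ :=
  ∑ a, p a * Real.exp (η * r a)

noncomputable def tilt {V : Type*} [Fintype V] (p r : V → ℝ) (η : ℝ) (a : V) : ℝ :=
  p a * Real.exp (η * r a) / Ztilt p r η

noncomputable def KLdiv {V : Type*} [Fintype V] (p q : V → ℝ) : ℝ :=
  ∑ a, p a * Real.log (p a / q a)

noncomputable def tiltMean {V : Type*} [Fintype V] (p r : V → ℝ) (η : ℝ) : ℝ :=
  ∑ a, tilt p r η a * r a

noncomputable def tiltVar {V : Type*} [Fintype V] (p r : V → ℝ) (η : ℝ) : ℝ :=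
  ∑ a, tilt p r η a * (r a - tiltMean p r η) ^ 2

namespace Tilt

open Real Finset

variable {V : Type*} [Fintype V] {p : V → ℝ} (r : V → ℝ) (η : ℝ)

lemma tiltVar_nonneg (hp : ∀ a, 0 < p a) : 0 ≤ tiltVar p r η := by
  refine sum_nonneg fun a _ => mul_nonneg (div_nonneg ?_ ?_) (sq_nonneg _)
  · exact (mul_pos (hp a) (exp_pos _)).le
  · exact sum_nonneg fun b _ => (mul_pos (hp b) (exp_pos _)).le

lemma hasDerivAt_Ztilt :
    HasDerivAt (Ztilt p r) (∑ a, p a * r a * exp (η * r a)) η := by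
  refine HasDerivAt.fun_sum fun a _ => ?_
  exact (((hasDerivAt_mul_const (r a)).exp).const_mul (p a)).congr_deriv (by ring)

lemma tiltMean_eq_div : tiltMean p r η = (∑ a, p a * r a * exp (η * r a)) / Ztilt p r η := by
  rw [tiltMean, sum_div]
  exact sum_congr rfl fun a _ => by rw [tilt]; ring

lemma hasDerivAt_log_Ztilt (hZ : Ztilt p r η ≠ 0) :
    HasDerivAt (fun η => log (Ztilt p r η)) (tiltMean p r η) η := by
  rw [tiltMean_eq_div]
  exact (hasDerivAt_Ztilt r η).log hZ

variable [Nonempty V]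

lemma Ztilt_pos (hp : ∀ a, 0 < p a) : 0 < Ztilt p r η :=
  sum_pos (fun a _ => mul_pos (hp a) (exp_pos _)) univ_nonempty

lemma sum_tilt (hp : ∀ a, 0 < p a) : ∑ a, tilt p r η a = 1 := by
  simp only [tilt, ← sum_div]
  exact div_self (Ztilt_pos r η hp).ne'

lemma tilt_div_eq_exp (hp : ∀ a, 0 < p a) (a : V) :
    tilt p r η a / p a = exp (η * r a - log (Ztilt p r η)) := by
  rw [exp_sub, exp_log (Ztilt_pos r η hp), tilt]
  field_simp [(hp a).ne']

lemma hasDerivAt_tilt (hp : ∀ a, 0 < p a) (a : V) :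
    HasDerivAt (fun η => tilt p r η a) (tilt p r η a * (r a - tiltMean p r η)) η := by
  have hexp : ∀ η, tilt p r η a = p a * exp (η * r a - log (Ztilt p r η)) := fun η => by
    rw [← tilt_div_eq_exp r η hp, mul_div_cancel₀ _ (hp a).ne']
  have hlin : HasDerivAt (fun η => η * r a - log (Ztilt p r η)) (r a - tiltMean p r η) η :=
    (hasDerivAt_mul_const (r a)).sub (hasDerivAt_log_Ztilt r η (Ztilt_pos r η hp).ne')
  simp only [hexp]
  exact (hlin.exp.const_mul (p a)).congr_deriv (by ring)

lemma hasDerivAt_tiltMean (hp : ∀ a, 0 < p a) :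
    HasDerivAt (tiltMean p r) (tiltVar p r η) η := by
  have hderiv := HasDerivAt.fun_sum (u := univ) fun a _ =>
    (hasDerivAt_tilt r η hp a).mul_const (r a)
  have hcentred : ∑ a, tilt p r η a * (r a - tiltMean p r η) = 0 := by
    simp only [mul_sub, sum_sub_distrib, ← sum_mul, sum_tilt r η hp, one_mul]
    rw [tiltMean, sub_self]
  refine hderiv.congr_deriv ?_
  calc ∑ a, tilt p r η a * (r a - tiltMean p r η) * r a
      = ∑ a, tilt p r η a * (r a - tiltMean p r η) ^ 2
        + tiltMean p r η * ∑ a, tilt p r η a * (r a - tiltMean p r η) := by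
        rw [mul_sum, ← sum_add_distrib]
        exact sum_congr rfl fun a _ => by ring
    _ = tiltVar p r η := by rw [hcentred, mul_zero, add_zero, tiltVar]

lemma KLdiv_tilt (hp : ∀ a, 0 < p a) :
    KLdiv (tilt p r η) p = η * tiltMean p r η - log (Ztilt p r η) := by
  simp only [KLdiv, tilt_div_eq_exp r η hp, log_exp, mul_sub, sum_sub_distrib, ← sum_mul,
    sum_tilt r η hp, one_mul, tiltMean, mul_sum]
  exact congrArg (· - _) (sum_congr rfl fun a _ => by ring)

lemma hasDerivAt_KLdiv_tilt (hp : ∀ a, 0 < p a) :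
    HasDerivAt (fun η => KLdiv (tilt p r η) p) (η * tiltVar p r η) η := by
  simp only [KLdiv_tilt r _ hp]
  exact (((hasDerivAt_id' η).mul (hasDerivAt_tiltMean r η hp)).sub
    (hasDerivAt_log_Ztilt r η (Ztilt_pos r η hp).ne')).congr_deriv (by ring)

lemma monotoneOn_KLdiv_tilt (hp : ∀ a, 0 < p a) :
    MonotoneOn (fun η => KLdiv (tilt p r η) p) (Set.Ici 0) := by
  refine monotoneOn_of_hasDerivWithinAt_nonneg (convex_Ici 0)
    (fun η _ => (hasDerivAt_KLdiv_tilt r η hp).continuousAt.continuousWithinAt)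
    (fun η _ => (hasDerivAt_KLdiv_tilt r η hp).hasDerivWithinAt) fun η hη => ?_
  rw [interior_Ici] at hη
  exact mul_nonneg (le_of_lt hη) (tiltVar_nonneg r η hp)

end Tilt

theorem stmt_15_general {V : Type*} [Fintype V] [Nonempty V]
    (π : V → ℝ) (hpos : ∀ a, 0 < π a)
    (r : V → ℝ) :
    ∀ η₁ η₂ : ℝ, 0 ≤ η₁ → η₁ ≤ η₂ →
      KLdiv (tilt π r η₁) π ≤ KLdiv (tilt π r η₂) π :=
  fun _ _ h₀ h₁₂ => Tilt.monotoneOn_KLdiv_tilt r hpos h₀ (le_trans h₀ h₁₂) h₁₂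

theorem stmt_15 {V : Type*} [Fintype V] [Nonempty V]
    (π : V → ℝ) (hpos : ∀ a, 0 < π a) (hsum : ∑ a, π a = 1)
    (r : V → ℝ) (hr : ∃ a b, r a ≠ r b) :
    ∀ η₁ η₂ : ℝ, 0 ≤ η₁ → η₁ ≤ η₂ →
      KLdiv (tilt π r η₁) π ≤ KLdiv (tilt π r η₂) π :=
  stmt_15_general π hpos r
end

section
/- Let V be a finite set, π a strictly positive probability distribution on V, r : V → ℝ, and η ≥ 0. The expected reward gap satisfies E_{π_η}[r] − E_π[r] ≥ 0, and if additionally r is not π-almost-surely constant and η > 0, the inequality is strict: E_{π_η}[r] > E_π[r]. -/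
/-!
`Ztilt π r η * (E_{π_η}[r] - E_π[r])` is the `π`-covariance of `exp (η r)` and `r`, two functions
that vary together. Written symmetrically as `½ ∑ π a π b (e b - e a)(r b - r a)` (weighted
Chebyshev), every term is `≥ 0`, and a pair with `r a ≠ r b` gives a positive term when `η > 0`.
-/

open Finset

section Chebyshev

variable {ι R : Type*} [CommRing R]

theorem sum_sum_mul_sub_mul_sub (s : Finset ι) (w f g : ι → R) :
    ∑ i ∈ s, ∑ j ∈ s, w i * w j * ((f j - f i) * (g j - g i)) =
      2 * ((∑ i ∈ s, w i) * ∑ i ∈ s, w i * f i * g i -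
        (∑ i ∈ s, w i * f i) * ∑ i ∈ s, w i * g i) := by
  have hexpand : ∀ i j, w i * w j * ((f j - f i) * (g j - g i)) =
      w i * (w j * f j * g j) - (w i * f i) * (w j * g j)
        - (w i * g i) * (w j * f j) + (w i * f i * g i) * w j := fun i j => by ring
  simp only [hexpand, sum_add_distrib, sum_sub_distrib, ← mul_sum, ← sum_mul]
  ring

variable [LinearOrder R] [IsStrictOrderedRing R] {s : Finset ι} {w f g : ι → R}

theorem Monovary.sum_mul_sum_le_sum_mul_sum (hfg : Monovary f g) (hw : ∀ i ∈ s, 0 ≤ w i) :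
    (∑ i ∈ s, w i * f i) * (∑ i ∈ s, w i * g i) ≤ (∑ i ∈ s, w i) * ∑ i ∈ s, w i * f i * g i := by
  have hcov : 0 ≤ ∑ i ∈ s, ∑ j ∈ s, w i * w j * ((f j - f i) * (g j - g i)) :=
    sum_nonneg fun i hi => sum_nonneg fun j hj =>
      mul_nonneg (mul_nonneg (hw i hi) (hw j hj)) (hfg.sub_mul_sub_nonneg i j)
  rw [sum_sum_mul_sub_mul_sub] at hcov
  linarith

theorem Monovary.sum_mul_sum_lt_sum_mul_sum (hfg : Monovary f g) (hw : ∀ i ∈ s, 0 < w i)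
    {i j : ι} (hi : i ∈ s) (hj : j ∈ s) (hij : 0 < (f j - f i) * (g j - g i)) :
    (∑ i ∈ s, w i * f i) * (∑ i ∈ s, w i * g i) < (∑ i ∈ s, w i) * ∑ i ∈ s, w i * f i * g i := by
  have hterm : ∀ k ∈ s, ∀ l ∈ s, 0 ≤ w k * w l * ((f l - f k) * (g l - g k)) := fun k hk l hl =>
    mul_nonneg (mul_pos (hw k hk) (hw l hl)).le (hfg.sub_mul_sub_nonneg k l)
  have hcov : 0 < ∑ k ∈ s, ∑ l ∈ s, w k * w l * ((f l - f k) * (g l - g k)) :=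
    sum_pos' (fun k hk => sum_nonneg (hterm k hk))
      ⟨i, hi, sum_pos' (hterm i hi) ⟨j, hj, mul_pos (mul_pos (hw i hi) (hw j hj)) hij⟩⟩
  rw [sum_sum_mul_sub_mul_sub] at hcov
  linarith

end Chebyshev

theorem StrictMono.sub_mul_sub_pos {R : Type*} [Ring R] [LinearOrder R] [IsStrictOrderedRing R]
    {φ : R → R} (hφ : StrictMono φ) {x y : R} (hxy : x ≠ y) : 0 < (φ x - φ y) * (x - y) := by
  rcases hxy.lt_or_gt with h | h
  · exact mul_pos_of_neg_of_neg (sub_neg.2 (hφ h)) (sub_neg.2 h)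
  · exact mul_pos (sub_pos.2 (hφ h)) (sub_pos.2 h)

section Tilt

variable {V : Type*} [Fintype V]

theorem Ztilt_pos [Nonempty V] {p : V → ℝ} (hp : ∀ a, 0 < p a) (r : V → ℝ) (η : ℝ) :
    0 < Ztilt p r η :=
  sum_pos (fun a _ => mul_pos (hp a) (Real.exp_pos _)) univ_nonempty

theorem sum_tilt_mul (p r : V → ℝ) (η : ℝ) (f : V → ℝ) :
    ∑ a, tilt p r η a * f a = (∑ a, p a * Real.exp (η * r a) * f a) / Ztilt p r η := by
  simp only [tilt, div_mul_eq_mul_div, ← sum_div]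

end Tilt

theorem monovary_exp_mul {ι : Type*} {r : ι → ℝ} {η : ℝ} (hη : 0 ≤ η) :
    Monovary (fun a => Real.exp (η * r a)) r := fun _ _ h =>
  Real.exp_le_exp.2 (mul_le_mul_of_nonneg_left h.le hη)

theorem stmt_17 {V : Type*} [Fintype V] [Nonempty V]
    (π : V → ℝ) (hpos : ∀ a, 0 < π a) (hsum : ∑ a, π a = 1)
    (r : V → ℝ) (η : ℝ) (hη : 0 ≤ η) :
    ∑ a, π a * r a ≤ ∑ a, tilt π r η a * r a ∧
    ((∃ a b, r a ≠ r b) → 0 < η → ∑ a, π a * r a < ∑ a, tilt π r η a * r a) := by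
  have hZ := Ztilt_pos hpos r η
  have hmono := monovary_exp_mul (r := r) hη
  rw [sum_tilt_mul, le_div_iff₀ hZ, lt_div_iff₀ hZ, mul_comm]
  refine ⟨?_, fun ⟨a, b, hab⟩ hηpos => ?_⟩
  · simpa only [Ztilt, hsum, one_mul] using
      hmono.sum_mul_sum_le_sum_mul_sum (s := univ) fun a _ => (hpos a).le
  · have hexp : StrictMono fun x => Real.exp (η * x) :=
      Real.exp_strictMono.comp (strictMono_mul_left_of_pos hηpos)
    simpa only [Ztilt, hsum, one_mul] using hmono.sum_mul_sum_lt_sum_mul_sum (fun a _ => hpos a)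
      (mem_univ b) (mem_univ a) (hexp.sub_mul_sub_pos hab)
end
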